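/- Let Q ∈ 𝒞, x ∈ Q^{(3)} and y ∈ ℝ³ with y ∉ Q^{(7)}. Then |K_{ij}(x−y) − K_{ij}(x_Q−y)| ≤ C·|Q|^{1/3}/|x−y|⁴ for all i,j ∈ {1,2,3}, where C depends only on σ and η. -/
import Mathlib


open MeasureTheory Real Set Metric Filter
open scoped BigOperators ENNReal

noncomputable section

/-- Three-dimensional Euclidean space. -/
abbrev E3 : Type := EuclideanSpace ℝ (Fin 3)

/-- The `i`-th standard basis vector of `ℝ³`. -/
def ev3 (i : Fin 3) : E3 := EuclideanSpace.single i (1 : ℝ)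

/-- A (closed) ball, encoded by its center and its radius. -/
abbrev BallData : Type := E3 × ℝ

/-- The set of points of a ball. -/
def ballSet (B : BallData) : Set E3 := Metric.closedBall B.1 B.2

/-- The volume `(4π/3) r³` of a ball. -/
def ballVol (B : BallData) : ℝ := (4 * Real.pi / 3) * B.2 ^ 3

/-- A cover `𝒞 = 𝒞^{σ,η}` of `ℝ³` by closed balls of radius `≥ 1` (volume `≥ 4π/3`) such that
(i) each ball intersects at most `σ` other balls of `𝒞`, and (ii) intersecting balls have
comparable sizes: `1/η ≤ |Q|^{1/3}/|Q'|^{1/3} ≤ η`. -/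
structure IsCover (σ η : ℝ) (𝒞 : Set BallData) : Prop where
  radius_ge_one : ∀ B ∈ 𝒞, (1 : ℝ) ≤ B.2
  covers : ∀ x : E3, ∃ B ∈ 𝒞, x ∈ ballSet B
  overlap_finite : ∀ B ∈ 𝒞, {B' | B' ∈ 𝒞 ∧ B' ≠ B ∧ (ballSet B ∩ ballSet B').Nonempty}.Finite
  overlap_card : ∀ B ∈ 𝒞,
    (({B' | B' ∈ 𝒞 ∧ B' ≠ B ∧ (ballSet B ∩ ballSet B').Nonempty}.ncard : ℝ)) ≤ σ
  comparable_lb : ∀ B ∈ 𝒞, ∀ B' ∈ 𝒞, (ballSet B ∩ ballSet B').Nonempty →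
    1 / η ≤ ballVol B ^ ((1:ℝ)/3) / ballVol B' ^ ((1:ℝ)/3)
  comparable_ub : ∀ B ∈ 𝒞, ∀ B' ∈ 𝒞, (ballSet B ∩ ballSet B').Nonempty →
    ballVol B ^ ((1:ℝ)/3) / ballVol B' ^ ((1:ℝ)/3) ≤ η

/-- The union `Q^{(n)}` of the layers `0,…,n` of balls of `𝒞` around `Q`:
`Q^{(0)} = Q` and `Q^{(n+1)} = ⋃ {B ∈ 𝒞 : B ∩ Q^{(n)} ≠ ∅}`. -/
def layerU (𝒞 : Set BallData) (Q : BallData) : ℕ → Set E3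
  | 0 => ballSet Q
  | n + 1 => ⋃ B ∈ {B | B ∈ 𝒞 ∧ (ballSet B ∩ layerU 𝒞 Q n).Nonempty}, ballSet B

/-- The collection `P^{(n)}` of balls in layers `0` to `n`: `P^{(0)} = {Q}` and for `n ≥ 1`,
`P^{(n)} = {B ∈ 𝒞 : B ∩ Q^{(n-1)} ≠ ∅}`. -/
def PColl (𝒞 : Set BallData) (Q : BallData) : ℕ → Set BallData
  | 0 => {Q}
  | n + 1 => {B | B ∈ 𝒞 ∧ (ballSet B ∩ layerU 𝒞 Q n).Nonempty}

/-- The union `S^{(n)}` of balls of the `n`-th layer: balls contained in `Q^{(n)}` but not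
in `Q^{(n-1)}` (for `n ≥ 1`; `n - 1` is truncated subtraction). -/
def SLayer (𝒞 : Set BallData) (Q : BallData) (n : ℕ) : Set E3 :=
  ⋃ B ∈ {B | B ∈ 𝒞 ∧ ballSet B ⊆ layerU 𝒞 Q n ∧ ¬ ballSet B ⊆ layerU 𝒞 Q (n - 1)}, ballSet B

/-- Distance between two subsets of `ℝ³`. -/
def setDistance (A B : Set E3) : ℝ := sInf {d : ℝ | ∃ a ∈ A, ∃ b ∈ B, d = dist a b}

variable {F : Type} [NormedAddCommGroup F] [NormedSpace ℝ F]

/-- The square of the Morrey-type norm `‖f‖_M`, i.e.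
`‖f‖_M² = sup_{B ∈ 𝒞} |B|^{-2/3} ∫_B |f|²`. -/
def MnSq (𝒞 : Set BallData) (f : E3 → F) : ℝ :=
  sSup {a : ℝ | ∃ B ∈ 𝒞, a = ballVol B ^ (-(2:ℝ)/3) * ∫ x in ballSet B, ‖f x‖ ^ 2}

/-- Membership in the space `M = M^{2,2}_𝒞`. -/
def MemM (𝒞 : Set BallData) (f : E3 → F) : Prop :=
  (∀ B ∈ 𝒞, IntegrableOn (fun x => ‖f x‖ ^ 2) (ballSet B) volume) ∧
  BddAbove {a : ℝ | ∃ B ∈ 𝒞, a = ballVol B ^ (-(2:ℝ)/3) * ∫ x in ballSet B, ‖f x‖ ^ 2}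

/-- The Morrey-type norm `‖f‖_M`. -/
def Mn (𝒞 : Set BallData) (f : E3 → F) : ℝ := Real.sqrt (MnSq 𝒞 f)

/-- `|∇f|² = ∑_i |∂_i f|²` (Frobenius norm squared of the spatial gradient). -/
def gradSq (f : E3 → F) (x : E3) : ℝ := ∑ i : Fin 3, ‖fderiv ℝ f x (ev3 i)‖ ^ 2

/-- `α_t[u] = esssup_{0<s<t} ‖u(s)‖_M²`. -/
def alphaT (𝒞 : Set BallData) (u : ℝ → E3 → F) (t : ℝ) : ℝ :=
  essSup (fun s => MnSq 𝒞 (u s)) (volume.restrict (Ioo 0 t))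

/-- `β_t[u] = sup_{B ∈ 𝒞} |B|^{-2/3} ∫₀ᵗ ∫_B |∇u|²`. -/
def betaT (𝒞 : Set BallData) (u : ℝ → E3 → F) (t : ℝ) : ℝ :=
  sSup {a : ℝ | ∃ B ∈ 𝒞,
    a = ballVol B ^ (-(2:ℝ)/3) * ∫ s in Ioc (0:ℝ) t, ∫ x in ballSet B, gradSq (u s) x}

/-- Divergence of a vector field. -/
def divg (f : E3 → E3) (x : E3) : ℝ := ∑ i : Fin 3, fderiv ℝ f x (ev3 i) i

/-- Laplacian of a scalar function. -/
def lapl (φ : E3 → ℝ) (x : E3) : ℝ :=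
  ∑ i : Fin 3, fderiv ℝ (fun y => fderiv ℝ φ y (ev3 i)) x (ev3 i)

/-- The kernel `K_{ij}(z) = ∂_i∂_j (4π|z|)⁻¹ = (3 z_i z_j − δ_{ij}|z|²)/(4π|z|⁵)`. -/
def Kker (i j : Fin 3) (z : E3) : ℝ :=
  (3 * z i * z j - (if i = j then (1:ℝ) else 0) * ‖z‖ ^ 2) / (4 * Real.pi * ‖z‖ ^ 5)

/-- The kernel `L_j(z) = z_j/(4π|z|³)`. -/
def Lker (j : Fin 3) (z : E3) : ℝ := z j / (4 * Real.pi * ‖z‖ ^ 3)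

/-- Weak (distributional) divergence-freeness of a vector field on `ℝ³`. -/
def WeaklyDivFree (f : E3 → E3) : Prop :=
  ∀ φ : E3 → ℝ, ContDiff ℝ (⊤ : ℕ∞) φ → HasCompactSupport φ →
    (∫ x, ∑ i : Fin 3, f x i * fderiv ℝ φ x (ev3 i)) = 0




lemma coord_abs_le_norm (z : E3) (i : Fin 3) : |z i| ≤ ‖z‖ := by
  rw [EuclideanSpace.norm_eq, ← Real.sqrt_sq_eq_abs]
  apply Real.sqrt_le_sqrt
  have h := Finset.single_le_sum (f := fun j => ‖z j‖ ^ 2)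
    (fun j _ => by positivity) (Finset.mem_univ i)
  simpa [Real.norm_eq_abs, sq_abs] using h

lemma aux_abs_le (p A d ai aj : ℝ) (hp : 3 < p) (hA : 0 < A)
    (hd0 : 0 ≤ d) (hd1 : d ≤ 1) (hai : |ai| ≤ A) (haj : |aj| ≤ A) :
    |(3 * ai * aj - d * A ^ 2) / (4 * p * A ^ 5)| ≤ 1 / (p * A ^ 3) := by
  have hp0 : (0:ℝ) < p := by linarith
  rw [abs_div, abs_of_pos (show (0:ℝ) < 4 * p * A ^ 5 by positivity)]
  have h1 : |3 * ai * aj - d * A ^ 2| ≤ 4 * A ^ 2 := by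
    have e3 := abs_sub (3 * ai * aj) (d * A ^ 2)
    have e1 : |3 * ai * aj| = 3 * (|ai| * |aj|) := by
      rw [abs_mul, abs_mul, abs_of_nonneg (by norm_num : (0:ℝ) ≤ 3), mul_assoc]
    have e2 : |d * A ^ 2| ≤ A ^ 2 := by
      rw [abs_mul, abs_of_nonneg (by positivity : (0:ℝ) ≤ A^2), abs_of_nonneg hd0]
      nlinarith [sq_nonneg A]
    have hbij : |ai| * |aj| ≤ A * A := mul_le_mul hai haj (abs_nonneg _) hA.le
    nlinarith [e1, e2, e3, hbij]
  rw [div_le_div_iff₀ (by positivity) (by positivity)]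
  nlinarith [mul_le_mul_of_nonneg_right h1 (le_of_lt (show (0:ℝ) < p * A^3 by positivity))]

lemma Kker_abs_le (i j : Fin 3) (z : E3) (hz : z ≠ 0) :
    |Kker i j z| ≤ 1 / (Real.pi * ‖z‖ ^ 3) := by
  have hz' : 0 < ‖z‖ := norm_pos_iff.mpr hz
  rw [Kker]
  exact aux_abs_le Real.pi ‖z‖ _ (z i) (z j) Real.pi_gt_three hz'
    (by split <;> norm_num) (by split <;> norm_num)
    (coord_abs_le_norm z i) (coord_abs_le_norm z j)

lemma frac_bound (p A h Na Nb Da Db : ℝ) (hp : 3 < p) (hA : 0 < A) (hhn : 0 ≤ h)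
    (hDa : 0 < Da) (hDb : 0 < Db)
    (n1 : |Na - Nb| ≤ 10 * A * h) (n2 : |Nb| ≤ 9 * A ^ 2)
    (n3 : |Db - Da| ≤ 160 * p * h * A ^ 4) (hDbub : Db ≤ 31 * p * A ^ 5)
    (hden : p ^ 2 * A ^ 10 / 2 ≤ Da * Db) :
    |Na / Da - Nb / Db| ≤ 1200 * h / A ^ 4 := by
  have hp0 : (0:ℝ) < p := by linarith
  rw [div_sub_div _ _ (ne_of_gt hDa) (ne_of_gt hDb), abs_div,
    abs_of_pos (mul_pos hDa hDb)]
  have hnum : |Na * Db - Nb * Da| ≤ 1750 * p * h * A ^ 6 := by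
    have e : Na * Db - Nb * Da = (Na - Nb) * Db + Nb * (Db - Da) := by ring
    have t1 : |(Na - Nb) * Db| ≤ (10 * A * h) * (31 * p * A ^ 5) := by
      rw [abs_mul, abs_of_pos hDb]
      exact mul_le_mul n1 hDbub hDb.le (by positivity)
    have t2 : |Nb * (Db - Da)| ≤ (9 * A ^ 2) * (160 * p * h * A ^ 4) := by
      rw [abs_mul]
      exact mul_le_mul n2 n3 (abs_nonneg _) (by positivity)
    calc |Na * Db - Nb * Da| ≤ |(Na - Nb) * Db| + |Nb * (Db - Da)| := by
          rw [e]; exact abs_add_le _ _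
      _ ≤ (10 * A * h) * (31 * p * A ^ 5) + (9 * A ^ 2) * (160 * p * h * A ^ 4) := by linarith
      _ ≤ 1750 * p * h * A ^ 6 := le_of_eq (by ring)
  have hnum' : |Na * Db - Da * Nb| ≤ 1750 * p * h * A ^ 6 := by
    rw [show Na * Db - Da * Nb = Na * Db - Nb * Da by ring]; exact hnum
  rw [div_le_div_iff₀ (mul_pos hDa hDb) (by positivity)]
  have key : 1750 * p * h * A ^ 6 * A ^ 4 ≤ 1200 * h * (p ^ 2 * A ^ 10 / 2) := by
    nlinarith [mul_nonneg (mul_nonneg (mul_nonneg hp0.le (by linarith : (0:ℝ) ≤ p - 3)) hhn)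
      (pow_pos hA 10).le, mul_nonneg (mul_nonneg hp0.le hhn) (pow_pos hA 10).le]
  calc |Na * Db - Da * Nb| * A ^ 4 ≤ (1750 * p * h * A ^ 6) * A ^ 4 :=
        mul_le_mul_of_nonneg_right hnum' (by positivity)
    _ ≤ 1200 * h * (p ^ 2 * A ^ 10 / 2) := key
    _ ≤ 1200 * h * (Da * Db) := mul_le_mul_of_nonneg_left hden (by positivity)

lemma aux_diff (p A B h d ai aj bi bj : ℝ)
    (hp : 3 < p) (hA : 0 < A) (hhn : 0 ≤ h)
    (hB2 : A / 2 ≤ B) (hB3 : B ≤ 3 * A / 2) (hABd : |A - B| ≤ h)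
    (hd0 : 0 ≤ d) (hd1 : d ≤ 1)
    (hai : |ai| ≤ A) (haj : |aj| ≤ A) (hbi : |bi| ≤ B) (hbj : |bj| ≤ B)
    (habi : |ai - bi| ≤ h) (habj : |aj - bj| ≤ h) :
    |(3 * ai * aj - d * A ^ 2) / (4 * p * A ^ 5)
      - (3 * bi * bj - d * B ^ 2) / (4 * p * B ^ 5)| ≤ 1200 * h / A ^ 4 := by
  have hp0 : (0:ℝ) < p := by linarith
  have hB : 0 < B := lt_of_lt_of_le (by linarith) hB2
  apply frac_bound p A h _ _ _ _ hp hA hhn (by positivity) (by positivity)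
  · -- n1
    have e : (3 * ai * aj - d * A ^ 2) - (3 * bi * bj - d * B ^ 2)
        = 3 * (ai * (aj - bj) + (ai - bi) * bj) - d * ((A - B) * (A + B)) := by ring
    have t1 : |ai * (aj - bj)| ≤ A * h := by
      rw [abs_mul]; exact mul_le_mul hai habj (abs_nonneg _) hA.le
    have t2 : |(ai - bi) * bj| ≤ h * B := by
      rw [abs_mul]; exact mul_le_mul habi hbj (abs_nonneg _) hhn
    have t3 : |d * ((A - B) * (A + B))| ≤ 1 * (h * (A + B)) := by
      rw [abs_mul, abs_mul]
      have hab : |A + B| = A + B := abs_of_pos (by linarith)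
      rw [hab]
      apply mul_le_mul (by rw [abs_of_nonneg hd0]; exact hd1)
        (mul_le_mul_of_nonneg_right hABd (by linarith)) (by positivity) (by norm_num)
    calc |(3 * ai * aj - d * A ^ 2) - (3 * bi * bj - d * B ^ 2)|
        ≤ 3 * |ai * (aj - bj) + (ai - bi) * bj| + |d * ((A - B) * (A + B))| := by
          rw [e]
          have h5 := abs_sub (3 * (ai * (aj - bj) + (ai - bi) * bj)) (d * ((A - B) * (A + B)))
          have h6 : |3 * (ai * (aj - bj) + (ai - bi) * bj)|
              = 3 * |ai * (aj - bj) + (ai - bi) * bj| := by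
            rw [abs_mul, abs_of_nonneg (by norm_num : (0:ℝ) ≤ 3)]
          linarith [h5, h6.le, h6.ge]
      _ ≤ 3 * (|ai * (aj - bj)| + |(ai - bi) * bj|) + 1 * (h * (A + B)) := by
          have := abs_add_le (ai * (aj - bj)) ((ai - bi) * bj)
          linarith [t3]
      _ ≤ 10 * A * h := by nlinarith [mul_le_mul_of_nonneg_left hB3 hhn]
  · -- n2
    have e1 : |3 * bi * bj| = 3 * (|bi| * |bj|) := by
      rw [abs_mul, abs_mul, abs_of_nonneg (by norm_num : (0:ℝ) ≤ 3), mul_assoc]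
    have e3 : |3 * bi * bj - d * B ^ 2| ≤ |3 * bi * bj| + |d * B ^ 2| := abs_sub _ _
    have e2 : |d * B ^ 2| ≤ B ^ 2 := by
      rw [abs_mul, abs_of_nonneg (by positivity : (0:ℝ) ≤ B^2), abs_of_nonneg hd0]
      nlinarith [sq_nonneg B]
    have hbij : |bi| * |bj| ≤ B * B := mul_le_mul hbi hbj (abs_nonneg _) hB.le
    have eBB : B * B = B ^ 2 := by ring
    have hB9 : 4 * B ^ 2 ≤ 9 * A ^ 2 := by nlinarith
    linarith [e1, e2, e3, hbij, hB9, eBB.le, eBB.ge]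
  · -- n3
    have e : 4 * p * B ^ 5 - 4 * p * A ^ 5
        = 4 * p * ((B - A) * (B^4 + B^3*A + B^2*A^2 + B*A^3 + A^4)) := by ring
    rw [e, abs_mul, abs_of_pos (by positivity : (0:ℝ) < 4 * p), abs_mul]
    have hBA : |B - A| ≤ h := by rw [abs_sub_comm]; exact hABd
    have hpoly : |B^4 + B^3*A + B^2*A^2 + B*A^3 + A^4| ≤ 14 * A^4 := by
      rw [abs_of_nonneg (by positivity)]
      nlinarith [pow_le_pow_left₀ hB.le hB3 4, pow_le_pow_left₀ hB.le hB3 3,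
        pow_le_pow_left₀ hB.le hB3 2, mul_le_mul_of_nonneg_right (pow_le_pow_left₀ hB.le hB3 3) hA.le,
        mul_le_mul_of_nonneg_right (pow_le_pow_left₀ hB.le hB3 2) (sq_nonneg A),
        mul_le_mul_of_nonneg_right hB3 (pow_nonneg hA.le 3), pow_pos hA 4]
    calc 4 * p * (|B - A| * |B^4 + B^3*A + B^2*A^2 + B*A^3 + A^4|)
        ≤ 4 * p * (h * (14 * A^4)) := by
          apply mul_le_mul_of_nonneg_left _ (by positivity)
          exact mul_le_mul hBA hpoly (abs_nonneg _) hhn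
      _ ≤ 160 * p * h * A ^ 4 := by
          nlinarith [mul_nonneg (mul_nonneg hp0.le hhn) (pow_nonneg hA.le 4)]
  · -- Db upper bound
    nlinarith [pow_le_pow_left₀ hB.le hB3 5, pow_nonneg hA.le 5]
  · -- denominator lower bound
    have h5 : (A/2) ^ 5 ≤ B ^ 5 := pow_le_pow_left₀ (by positivity) hB2 5
    nlinarith [mul_le_mul_of_nonneg_left h5 (by positivity : (0:ℝ) ≤ 16 * p^2 * A^5)]

lemma Kker_diff_le (i j : Fin 3) (a b : E3) (ha : a ≠ 0) (hab : ‖a - b‖ ≤ ‖a‖ / 2) :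
    |Kker i j a - Kker i j b| ≤ 1200 * ‖a - b‖ / ‖a‖ ^ 4 := by
  have hA : 0 < ‖a‖ := norm_pos_iff.mpr ha
  have hABd : |‖a‖ - ‖b‖| ≤ ‖a - b‖ := abs_norm_sub_norm_le a b
  have h1 := (abs_le.mp hABd).1
  have h2 := (abs_le.mp hABd).2
  have habi : |a i - b i| ≤ ‖a - b‖ := by
    have e : a i - b i = (a - b) i := rfl
    rw [e]; exact coord_abs_le_norm _ i
  have habj : |a j - b j| ≤ ‖a - b‖ := by
    have e : a j - b j = (a - b) j := rfl
    rw [e]; exact coord_abs_le_norm _ j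
  rw [Kker, Kker]
  exact aux_diff Real.pi ‖a‖ ‖b‖ ‖a - b‖ _ (a i) (a j) (b i) (b j)
    Real.pi_gt_three hA (norm_nonneg _) (by linarith) (by linarith) hABd
    (by split <;> norm_num) (by split <;> norm_num)
    (coord_abs_le_norm a i) (coord_abs_le_norm a j)
    (coord_abs_le_norm b i) (coord_abs_le_norm b j) habi habj

lemma layerU_succ_mem {𝒞 : Set BallData} {Q : BallData} {n : ℕ} {x : E3} :
    x ∈ layerU 𝒞 Q (n+1) ↔ ∃ B, B ∈ 𝒞 ∧ (ballSet B ∩ layerU 𝒞 Q n).Nonempty ∧ x ∈ ballSet B := by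
  simp only [layerU, Set.mem_iUnion, Set.mem_setOf_eq, exists_prop]
  tauto

lemma ballVol_rpow {B : BallData} (hr : 0 < B.2) :
    ballVol B ^ ((1:ℝ)/3) = (4*Real.pi/3) ^ ((1:ℝ)/3) * B.2 := by
  unfold ballVol
  rw [Real.mul_rpow (by positivity) (pow_nonneg hr.le 3)]
  congr 1
  rw [← Real.rpow_natCast B.2 3, ← Real.rpow_mul hr.le]
  norm_num

lemma eta_ge_one {σ η : ℝ} {𝒞 : Set BallData} (hC : IsCover σ η 𝒞) {Q : BallData}
    (hQ : Q ∈ 𝒞) : 1 ≤ η := by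
  have h1 : (1:ℝ) ≤ Q.2 := hC.radius_ge_one Q hQ
  have hne : (ballSet Q ∩ ballSet Q).Nonempty :=
    ⟨Q.1, mem_closedBall_self (by linarith), mem_closedBall_self (by linarith)⟩
  have h := hC.comparable_ub Q hQ Q hQ hne
  have hv : 0 < ballVol Q ^ ((1:ℝ)/3) := by
    rw [ballVol_rpow (by linarith : 0 < Q.2)]
    positivity
  rwa [div_self (ne_of_gt hv)] at h

lemma radius_le {σ η : ℝ} {𝒞 : Set BallData} (hC : IsCover σ η 𝒞) {B B' : BallData}
    (hB : B ∈ 𝒞) (hB' : B' ∈ 𝒞) (hint : (ballSet B ∩ ballSet B').Nonempty) :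
    B.2 ≤ η * B'.2 := by
  have hr : 0 < B.2 := lt_of_lt_of_le one_pos (hC.radius_ge_one B hB)
  have hr' : 0 < B'.2 := lt_of_lt_of_le one_pos (hC.radius_ge_one B' hB')
  have h := hC.comparable_ub B hB B' hB' hint
  rw [ballVol_rpow hr, ballVol_rpow hr'] at h
  have hc : (0:ℝ) < (4*Real.pi/3) ^ ((1:ℝ)/3) := Real.rpow_pos_of_pos (by positivity) _
  rw [mul_div_mul_left _ _ (ne_of_gt hc)] at h
  rwa [div_le_iff₀ hr'] at h

lemma radius_layer {σ η : ℝ} {𝒞 : Set BallData} {Q : BallData}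
    (hC : IsCover σ η 𝒞) (hQ : Q ∈ 𝒞) :
    ∀ n, ∀ B ∈ 𝒞, (ballSet B ∩ layerU 𝒞 Q n).Nonempty → B.2 ≤ η ^ (n+1) * Q.2 := by
  have hη0 : (0:ℝ) ≤ η := le_trans zero_le_one (eta_ge_one hC hQ)
  intro n
  induction n with
  | zero =>
    intro B hB hint
    simpa [pow_one] using radius_le hC hB hQ hint
  | succ n ih =>
    rintro B hB ⟨p, hpB, hpL⟩
    rcases layerU_succ_mem.mp hpL with ⟨B', hB', hB'int, hpB'⟩
    have h1 : B.2 ≤ η * B'.2 := radius_le hC hB hB' ⟨p, hpB, hpB'⟩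
    have h2 : B'.2 ≤ η ^ (n+1) * Q.2 := ih B' hB' hB'int
    calc B.2 ≤ η * (η ^ (n+1) * Q.2) :=
          le_trans h1 (mul_le_mul_of_nonneg_left h2 hη0)
      _ = η ^ (n+1+1) * Q.2 := by ring

lemma dist_layer {σ η : ℝ} {𝒞 : Set BallData} {Q : BallData}
    (hC : IsCover σ η 𝒞) (hQ : Q ∈ 𝒞) :
    ∀ n, ∀ x ∈ layerU 𝒞 Q n, dist x Q.1 ≤ (2*(n:ℝ)+1) * η ^ n * Q.2 := by
  have hη1 : (1:ℝ) ≤ η := eta_ge_one hC hQ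
  have hη0 : (0:ℝ) ≤ η := le_trans zero_le_one hη1
  have hr : 0 < Q.2 := lt_of_lt_of_le one_pos (hC.radius_ge_one Q hQ)
  intro n
  induction n with
  | zero =>
    intro x hx
    have hx' : dist x Q.1 ≤ Q.2 := mem_closedBall.mp hx
    simpa using hx'
  | succ n ih =>
    intro x hx
    rcases layerU_succ_mem.mp hx with ⟨B, hB, ⟨p, hpB, hpL⟩, hxB⟩
    have hrB : B.2 ≤ η ^ (n+1) * Q.2 := radius_layer hC hQ n B hB ⟨p, hpB, hpL⟩
    have hx1 : dist x B.1 ≤ B.2 := mem_closedBall.mp hxB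
    have hp1 : dist p B.1 ≤ B.2 := mem_closedBall.mp hpB
    have h1 : dist x p ≤ 2 * B.2 := by
      calc dist x p ≤ dist x B.1 + dist B.1 p := dist_triangle _ _ _
        _ = dist x B.1 + dist p B.1 := by rw [dist_comm B.1 p]
        _ ≤ 2 * B.2 := by linarith
    have h2 : dist p Q.1 ≤ (2*(n:ℝ)+1) * η ^ n * Q.2 := ih p hpL
    have hmono : η ^ n ≤ η ^ (n+1) := pow_le_pow_right₀ hη1 (Nat.le_succ n)
    have hX : η ^ n * Q.2 ≤ η ^ (n+1) * Q.2 := mul_le_mul_of_nonneg_right hmono hr.le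
    have hn0 : (0:ℝ) ≤ 2*(n:ℝ)+1 := by positivity
    have h3 := mul_le_mul_of_nonneg_left hX hn0
    calc dist x Q.1 ≤ dist x p + dist p Q.1 := dist_triangle _ _ _
      _ ≤ (2*((n:ℝ)+1)+1) * η ^ (n+1) * Q.2 := by push_cast; nlinarith [hrB, h1, h2]
      _ = (2*((n+1:ℕ):ℝ)+1) * η ^ (n+1) * Q.2 := by push_cast; ring

lemma layerU_mono {𝒞 : Set BallData} {Q : BallData} (hQ : Q ∈ 𝒞) :
    ∀ n, layerU 𝒞 Q n ⊆ layerU 𝒞 Q (n+1) := by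
  intro n
  induction n with
  | zero =>
    intro x hx
    exact layerU_succ_mem.mpr ⟨Q, hQ, ⟨x, hx, hx⟩, hx⟩
  | succ n ih =>
    intro x hx
    rcases layerU_succ_mem.mp hx with ⟨B, hB, ⟨p, h1, h2⟩, hxB⟩
    exact layerU_succ_mem.mpr ⟨B, hB, ⟨p, h1, ih h2⟩, hxB⟩

lemma layerU_le {𝒞 : Set BallData} {Q : BallData} (hQ : Q ∈ 𝒞) {m n : ℕ} (h : m ≤ n) :
    layerU 𝒞 Q m ⊆ layerU 𝒞 Q n := by
  induction h with
  | refl => exact subset_rfl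
  | step _ ih => exact ih.trans (layerU_mono hQ _)

/-- Kernel difference estimate (3.8): for `x ∈ Q⁽³⁾` and `y ∉ Q⁽⁷⁾`,
`|K_{ij}(x−y) − K_{ij}(x_Q−y)| ≤ C |Q|^{1/3}/|x−y|⁴`, with `C = C(σ,η)`. -/
theorem kernel_difference_bound (σ η : ℝ) (hσ : 0 < σ) (hη : 0 < η) :
    ∃ C > (0:ℝ), ∀ 𝒞 : Set BallData, IsCover σ η 𝒞 → ∀ Q ∈ 𝒞,
      ∀ x ∈ layerU 𝒞 Q 3, ∀ y : E3, y ∉ layerU 𝒞 Q 7 → ∀ i j : Fin 3,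
        |Kker i j (x - y) - Kker i j (Q.1 - y)|
          ≤ C * ballVol Q ^ ((1:ℝ)/3) / dist x y ^ 4 := by
  refine ⟨10^6 * η^12, by positivity, ?_⟩
  intro 𝒞 hC Q hQ x hx y hy i j
  have hη1 : 1 ≤ η := eta_ge_one hC hQ
  have hη0 : (0:ℝ) ≤ η := by linarith
  have hr1 : 1 ≤ Q.2 := hC.radius_ge_one Q hQ
  have hr : 0 < Q.2 := by linarith
  have hxQ : dist x Q.1 ≤ 7 * η^3 * Q.2 := by
    have h := dist_layer hC hQ 3 x hx
    norm_num at h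
    linarith
  have hyQ : Q.2 < dist y Q.1 := by
    by_contra hcon
    push_neg at hcon
    have hy0 : y ∈ layerU 𝒞 Q 0 := mem_closedBall.mpr hcon
    exact hy (layerU_le hQ (by norm_num : (0:ℕ) ≤ 7) hy0)
  have hx7 : x ∈ layerU 𝒞 Q 7 := layerU_le hQ (by norm_num : (3:ℕ) ≤ 7) hx
  have hxy : x ≠ y := fun e => hy (e ▸ hx7)
  have hdpos : 0 < dist x y := dist_pos.mpr hxy
  have hnormA : ‖x - y‖ = dist x y := (dist_eq_norm x y).symm
  have hb_norm : Q.2 < ‖Q.1 - y‖ := by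
    rw [← dist_eq_norm, dist_comm]
    exact hyQ
  have hab : ‖(x - y) - (Q.1 - y)‖ = dist x Q.1 := by
    rw [show (x - y) - (Q.1 - y) = x - Q.1 by abel, ← dist_eq_norm]
  have hvol : Q.2 ≤ ballVol Q ^ ((1:ℝ)/3) := by
    rw [ballVol_rpow hr]
    have h1 : (1:ℝ) ≤ (4*Real.pi/3) ^ ((1:ℝ)/3) := by
      have := Real.rpow_le_rpow (by norm_num : (0:ℝ) ≤ 1)
        (by nlinarith [Real.pi_gt_three] : (1:ℝ) ≤ 4*Real.pi/3) (by norm_num : (0:ℝ) ≤ (1:ℝ)/3)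
      rwa [Real.one_rpow] at this
    nlinarith
  have hV0 : 0 < ballVol Q ^ ((1:ℝ)/3) := lt_of_lt_of_le hr hvol
  have hη312 : η^3 ≤ η^12 := pow_le_pow_right₀ hη1 (by norm_num)
  have hane : x - y ≠ 0 := sub_ne_zero.mpr hxy
  by_cases hcase : 14 * η^3 * Q.2 ≤ dist x y
  · -- far case
    have h2 : ‖(x - y) - (Q.1 - y)‖ ≤ ‖x - y‖ / 2 := by
      rw [hab, hnormA]; linarith
    have hmain := Kker_diff_le i j (x - y) (Q.1 - y) hane h2
    rw [hab, hnormA] at hmain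
    refine le_trans hmain ?_
    have hnum : 1200 * dist x Q.1 ≤ 10^6 * η^12 * ballVol Q ^ ((1:ℝ)/3) := by
      nlinarith [mul_le_mul hη312 hvol hr.le (pow_nonneg hη0 12),
        mul_nonneg (pow_nonneg hη0 3) hr.le]
    exact div_le_div_of_nonneg_right hnum (pow_pos hdpos 4).le
  · -- near case
    push_neg at hcase
    have hbne : Q.1 - y ≠ 0 := by
      intro e
      rw [e, norm_zero] at hb_norm
      linarith
    have k1 := Kker_abs_le i j (x - y) hane
    have k2 := Kker_abs_le i j (Q.1 - y) hbne
    rw [hnormA] at k1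
    have habs : |Kker i j (x - y) - Kker i j (Q.1 - y)|
        ≤ 1 / (Real.pi * dist x y ^ 3) + 1 / (Real.pi * ‖Q.1 - y‖ ^ 3) :=
      le_trans (abs_sub _ _) (add_le_add k1 k2)
    refine le_trans habs ?_
    have hπ3 := Real.pi_gt_three
    have half1 : 1 / (Real.pi * dist x y ^ 3)
        ≤ 500000 * η^12 * ballVol Q ^ ((1:ℝ)/3) / dist x y ^ 4 := by
      rw [div_le_div_iff₀ (by positivity) (pow_pos hdpos 4)]
      have hA14 : dist x y ≤ 14 * η^12 * ballVol Q ^ ((1:ℝ)/3) := by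
        nlinarith [mul_le_mul hη312 hvol hr.le (pow_nonneg hη0 12)]
      nlinarith [mul_le_mul_of_nonneg_right hA14 (pow_pos hdpos 3).le,
        mul_nonneg (mul_nonneg (pow_nonneg hη0 12) hV0.le) (pow_pos hdpos 3).le]
    have half2 : 1 / (Real.pi * ‖Q.1 - y‖ ^ 3)
        ≤ 500000 * η^12 * ballVol Q ^ ((1:ℝ)/3) / dist x y ^ 4 := by
      have hbpos : 0 < ‖Q.1 - y‖ := lt_trans hr hb_norm
      rw [div_le_div_iff₀ (by positivity) (pow_pos hdpos 4)]
      have hA4 : dist x y ^ 4 ≤ (14 * η^3 * Q.2) ^ 4 :=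
        pow_le_pow_left₀ hdpos.le hcase.le 4
      have hQb : Q.2 ^ 3 ≤ ‖Q.1 - y‖ ^ 3 := pow_le_pow_left₀ hr.le hb_norm.le 3
      nlinarith [hA4, mul_le_mul_of_nonneg_left hQb (mul_nonneg (pow_nonneg hη0 12) hV0.le),
        mul_le_mul_of_nonneg_left hvol (mul_nonneg (pow_nonneg hη0 12) (pow_nonneg hr.le 3)),
        mul_nonneg (mul_nonneg (pow_nonneg hη0 12) hV0.le) (pow_nonneg hbpos.le 3)]
    calc 1 / (Real.pi * dist x y ^ 3) + 1 / (Real.pi * ‖Q.1 - y‖ ^ 3)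
        ≤ 500000 * η^12 * ballVol Q ^ ((1:ℝ)/3) / dist x y ^ 4
          + 500000 * η^12 * ballVol Q ^ ((1:ℝ)/3) / dist x y ^ 4 := add_le_add half1 half2
      _ = 10^6 * η^12 * ballVol Q ^ ((1:ℝ)/3) / dist x y ^ 4 := by ring

end
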